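/- arXiv:1801.06705 — 6 statements merged into one kernel-verified Lean document; each statement's English description precedes it below -/
import Mathlib

section
/- Let A be a unital Banach algebra with exactly one non-trivial proper closed (two-sided) ideal I. Then the Lie normalizer N(I) = {a ∈ A : ax - xa ∈ I for all x ∈ A} equals ℂ1 + I, and in particular ℂ1 + I is a closed Lie ideal of A. -/
/-!
Modulo `I` the normalizer condition says that the image of `a` is central in the Banach algebra
`B = A ⧸ I`, and by uniqueness of `I` the only closed two-sided ideals of `B` are `0` and `B`.
For central `z ∈ B` the closure of `zB` is a closed two-sided ideal. If `z` is not a unit, neither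
is any `zy` (a central element with a one-sided inverse is a unit), and the nonunits form a closed
set, so this ideal is not `B`; hence it is `0` and `z = 0`. Applying this to `z - λ` with `λ` in the
nonempty spectrum of `z` shows that the center of `B` is `ℂ1`. Finally `ℂ1 + I` is the preimage of
this finite-dimensional, hence closed, subspace of `B`.
-/

open Filter Topology

namespace Ideal.Quotient

variable {R : Type*} [SeminormedRing R] (I : Ideal R) [I.IsTwoSided]

theorem norm_mul_le_of_isTwoSided (x y : R ⧸ I) : ‖x * y‖ ≤ ‖x‖ * ‖y‖ := by
  have hlim : Tendsto (fun δ : ℝ => (‖x‖ + δ) * (‖y‖ + δ)) (𝓝[>] 0) (𝓝 (‖x‖ * ‖y‖)) := by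
    refine tendsto_nhdsWithin_of_tendsto_nhds (Continuous.tendsto' ?_ 0 _ ?_)
    · fun_prop
    · simp only [add_zero]
  refine ge_of_tendsto hlim (eventually_nhdsWithin_of_forall fun δ (hδ : 0 < δ) => ?_)
  obtain ⟨a, rfl, ha⟩ := Submodule.Quotient.norm_mk_lt x hδ
  obtain ⟨b, rfl, hb⟩ := Submodule.Quotient.norm_mk_lt y hδ
  calc ‖Ideal.Quotient.mk I a * Ideal.Quotient.mk I b‖ = ‖Ideal.Quotient.mk I (a * b)‖ := by
        rw [map_mul]
    _ ≤ ‖a * b‖ := Submodule.Quotient.norm_mk_le I _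
    _ ≤ ‖a‖ * ‖b‖ := norm_mul_le a b
    _ ≤ _ := by gcongr

noncomputable instance seminormedRing : SeminormedRing (R ⧸ I) :=
  { Ideal.Quotient.ring I, Submodule.Quotient.seminormedAddCommGroup I with
    norm_mul_le := norm_mul_le_of_isTwoSided I }

noncomputable instance normedRing [IsClosed (I : Set R)] : NormedRing (R ⧸ I) :=
  { seminormedRing I, Submodule.Quotient.normedAddCommGroup I with }

noncomputable instance normedAlgebraOfIsTwoSided (𝕜 : Type*) [NormedField 𝕜] [NormedAlgebra 𝕜 R] :
    NormedAlgebra 𝕜 (R ⧸ I) :=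
  { Ideal.Quotient.algebra 𝕜, Submodule.Quotient.normedSpace I 𝕜 with }

end Ideal.Quotient

namespace TwoSidedIdeal

variable {R : Type*} [Ring R]

protected def closure [TopologicalSpace R] [IsTopologicalRing R] (I : TwoSidedIdeal R) :
    TwoSidedIdeal R :=
  mk' (closure I) (subset_closure I.zero_mem)
    (fun hx hy => map_mem_closure₂ continuous_add hx hy fun _ ha _ hb => I.add_mem ha hb)
    (fun hx => map_mem_closure continuous_neg hx fun _ ha => I.neg_mem ha)
    (fun {x _} hy => map_mem_closure (continuous_const_mul x) hy fun _ hb => I.mul_mem_left x _ hb)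
    (fun {_ y} hx => map_mem_closure (f := (· * y)) (continuous_mul_const y) hx
      fun _ ha => I.mul_mem_right _ y ha)

lemma coe_closure [TopologicalSpace R] [IsTopologicalRing R] (I : TwoSidedIdeal R) :
    (I.closure : Set R) = closure I :=
  Set.ext fun x => mem_mk' _ _ _ _ _ _ x

lemma exists_mul_eq_of_mem_span_singleton {z x : R} (hz : ∀ y, Commute z y)
    (hx : x ∈ span {z}) : ∃ y, z * y = x := by
  induction hx using span_induction with
  | mem x hx => exact ⟨1, by rw [Set.mem_singleton_iff.1 hx, mul_one]⟩
  | zero => exact ⟨0, mul_zero z⟩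
  | add x y _ _ hx hy =>
    obtain ⟨a, rfl⟩ := hx
    obtain ⟨b, rfl⟩ := hy
    exact ⟨a + b, mul_add z a b⟩
  | neg x _ hx =>
    obtain ⟨a, rfl⟩ := hx
    exact ⟨-a, mul_neg z a⟩
  | left_absorb a x _ hx =>
    obtain ⟨b, rfl⟩ := hx
    exact ⟨a * b, by rw [← mul_assoc, ← mul_assoc, (hz a).eq]⟩
  | right_absorb b x _ hx =>
    obtain ⟨a, rfl⟩ := hx
    exact ⟨a * b, (mul_assoc z a b).symm⟩

end TwoSidedIdeal

def OnlyTrivialClosedIdeals (R : Type*) [Ring R] [TopologicalSpace R] : Prop :=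
  ∀ K : TwoSidedIdeal R, IsClosed (K : Set R) → K = ⊥ ∨ K = ⊤

theorem isUnit_or_eq_zero_of_forall_commute {B : Type*} [NormedRing B] [HasSummableGeomSeries B]
    (hB : OnlyTrivialClosedIdeals B) {z : B} (hz : ∀ y, Commute z y) : IsUnit z ∨ z = 0 := by
  refine or_iff_not_imp_left.2 fun hz_unit => ?_
  have hspan : (TwoSidedIdeal.span {z} : Set B) ⊆ nonunits B := by
    intro x hx hx_unit
    obtain ⟨y, rfl⟩ := TwoSidedIdeal.exists_mul_eq_of_mem_span_singleton hz hx
    exact hz_unit ((hz y).isUnit_mul_iff.1 hx_unit).1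
  set K := (TwoSidedIdeal.span {z}).closure
  have hK : (K : Set B) = closure (TwoSidedIdeal.span {z}) := TwoSidedIdeal.coe_closure _
  have hclosure : (K : Set B) ⊆ nonunits B := hK ▸ closure_minimal hspan nonunits.isClosed
  have hz_mem : z ∈ (K : Set B) := hK ▸ subset_closure (TwoSidedIdeal.subset_span rfl)
  rcases hB K (hK ▸ isClosed_closure) with hbot | htop
  · rwa [SetLike.mem_coe, hbot, TwoSidedIdeal.mem_bot] at hz_mem
  · exact absurd isUnit_one (hclosure ((TwoSidedIdeal.one_mem_iff _).2 htop))

theorem Subalgebra.center_eq_bot_of_onlyTrivialClosedIdeals {B : Type*} [NormedRing B]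
    [NormedAlgebra ℂ B] [CompleteSpace B] [Nontrivial B] (hB : OnlyTrivialClosedIdeals B) :
    Subalgebra.center ℂ B = ⊥ := by
  refine eq_bot_iff.2 fun z hz => ?_
  obtain ⟨c, hc⟩ := spectrum.nonempty z
  have hcomm : ∀ y, Commute (algebraMap ℂ B c - z) y := fun y =>
    ((Subalgebra.mem_center_iff.1 (sub_mem (algebraMap_mem _ c) hz)) y).symm
  exact ⟨c, sub_eq_zero.1 ((isUnit_or_eq_zero_of_forall_commute hB hcomm).resolve_left hc)⟩

theorem onlyTrivialClosedIdeals_quotient {A : Type*} [SeminormedRing A] (I : TwoSidedIdeal A)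
    (hI : ∀ J : TwoSidedIdeal A, IsClosed (J : Set A) → I ≤ J → J = I ∨ J = ⊤) :
    OnlyTrivialClosedIdeals (A ⧸ I.asIdeal) := by
  intro K hK
  have hIK : I ≤ K.comap (Ideal.Quotient.mk I.asIdeal) := fun x hx => by
    rw [TwoSidedIdeal.mem_comap, Ideal.Quotient.eq_zero_iff_mem.2 (TwoSidedIdeal.mem_asIdeal.2 hx)]
    exact K.zero_mem
  rcases hI _ (hK.preimage continuous_quotient_mk') hIK with h | h
  · left
    ext q
    obtain ⟨a, rfl⟩ := Ideal.Quotient.mk_surjective q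
    rw [TwoSidedIdeal.mem_bot, Ideal.Quotient.eq_zero_iff_mem, TwoSidedIdeal.mem_asIdeal]
    conv_rhs => rw [← h, TwoSidedIdeal.mem_comap]
  · right
    rw [← TwoSidedIdeal.one_mem_iff, ← map_one (Ideal.Quotient.mk I.asIdeal),
      ← TwoSidedIdeal.mem_comap, h]
    trivial

section Normalizer

variable {𝕜 R : Type*} [CommSemiring 𝕜] [Ring R] [Algebra 𝕜 R] (I : TwoSidedIdeal R)

theorem Ideal.Quotient.mk_mem_center_iff {a : R} :
    Ideal.Quotient.mk I.asIdeal a ∈ Subalgebra.center 𝕜 (R ⧸ I.asIdeal) ↔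
      ∀ x, a * x - x * a ∈ I := by
  rw [Subalgebra.mem_center_iff, (Ideal.Quotient.mk_surjective).forall]
  refine forall_congr' fun x => ?_
  rw [← map_mul, ← map_mul, Ideal.Quotient.eq, TwoSidedIdeal.mem_asIdeal, ← neg_mem_iff, neg_sub]

theorem Ideal.Quotient.mk_mem_bot_iff {a : R} :
    Ideal.Quotient.mk I.asIdeal a ∈ (⊥ : Subalgebra 𝕜 (R ⧸ I.asIdeal)) ↔
      ∃ (c : 𝕜) (z : R), z ∈ I ∧ a = c • (1 : R) + z := by
  rw [Algebra.mem_bot]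
  refine exists_congr fun c => ?_
  rw [← Ideal.Quotient.mk_algebraMap, eq_comm, Ideal.Quotient.eq, TwoSidedIdeal.mem_asIdeal,
    Algebra.algebraMap_eq_smul_one]
  exact ⟨fun h => ⟨_, h, (add_sub_cancel _ _).symm⟩, by rintro ⟨z, hz, rfl⟩; simpa using hz⟩

end Normalizer

theorem isClosed_setOf_exists_smul_one_add_mem {𝕜 A : Type*} [NontriviallyNormedField 𝕜]
    [CompleteSpace 𝕜] [NormedRing A] [NormedAlgebra 𝕜 A] (I : TwoSidedIdeal A)
    (hI : IsClosed (I : Set A)) :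
    IsClosed {a : A | ∃ (c : 𝕜) (z : A), z ∈ I ∧ a = c • (1 : A) + z} := by
  have : IsClosed (I.asIdeal : Set A) := hI
  have hpre : {a : A | ∃ (c : 𝕜) (z : A), z ∈ I ∧ a = c • (1 : A) + z} =
      Ideal.Quotient.mk I.asIdeal ⁻¹' (⊥ : Subalgebra 𝕜 (A ⧸ I.asIdeal)) :=
    Set.ext fun _ => (Ideal.Quotient.mk_mem_bot_iff I).symm
  have : FiniteDimensional 𝕜 (Subalgebra.toSubmodule (⊥ : Subalgebra 𝕜 (A ⧸ I.asIdeal))) :=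
    Subalgebra.finite_bot
  have hbot_closed : IsClosed ((⊥ : Subalgebra 𝕜 (A ⧸ I.asIdeal)) : Set (A ⧸ I.asIdeal)) :=
    Submodule.closed_of_finiteDimensional (E := A ⧸ I.asIdeal)
      (Subalgebra.toSubmodule (⊥ : Subalgebra 𝕜 (A ⧸ I.asIdeal)))
  rw [hpre]
  exact hbot_closed.preimage continuous_quotient_mk'

/-- If a unital Banach algebra `A` has exactly one non-trivial proper closed
two-sided ideal `I`, then the Lie normalizer `N(I)` equals `ℂ1 + I`, and `ℂ1 + I` is a
closed Lie ideal of `A`. -/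
theorem lieNormalizer_of_unique_closed_ideal
    (A : Type*) [NormedRing A] [NormedAlgebra ℂ A] [CompleteSpace A]
    (I : TwoSidedIdeal A) (hcl : IsClosed (I : Set A)) (hbot : I ≠ ⊥) (htop : I ≠ ⊤)
    (huniq : ∀ J : TwoSidedIdeal A, IsClosed (J : Set A) → J ≠ ⊥ → J ≠ ⊤ → J = I) :
    {a : A | ∀ x : A, a * x - x * a ∈ I} =
        {a : A | ∃ (c : ℂ) (z : A), z ∈ I ∧ a = c • (1 : A) + z} ∧
      IsClosed {a : A | ∃ (c : ℂ) (z : A), z ∈ I ∧ a = c • (1 : A) + z} ∧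
      ∀ a ∈ {a : A | ∃ (c : ℂ) (z : A), z ∈ I ∧ a = c • (1 : A) + z}, ∀ x : A,
        a * x - x * a ∈ {a : A | ∃ (c : ℂ) (z : A), z ∈ I ∧ a = c • (1 : A) + z} := by
  have : IsClosed (I.asIdeal : Set A) := hcl
  have : Nontrivial (A ⧸ I.asIdeal) :=
    Ideal.Quotient.nontrivial_iff.2 fun h =>
      htop ((TwoSidedIdeal.one_mem_iff I).1 (TwoSidedIdeal.mem_asIdeal.1 (h ▸ Submodule.mem_top)))
  have hsimple : OnlyTrivialClosedIdeals (A ⧸ I.asIdeal) :=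
    onlyTrivialClosedIdeals_quotient I fun J hJ hIJ => or_iff_not_imp_right.2
      fun hJtop => huniq J hJ (ne_bot_of_le_ne_bot hbot hIJ) hJtop
  have hnormalizer : {a : A | ∀ x : A, a * x - x * a ∈ I} =
      {a : A | ∃ (c : ℂ) (z : A), z ∈ I ∧ a = c • (1 : A) + z} := by
    ext a
    calc (∀ x, a * x - x * a ∈ I)
        ↔ Ideal.Quotient.mk I.asIdeal a ∈ Subalgebra.center ℂ (A ⧸ I.asIdeal) :=
          (Ideal.Quotient.mk_mem_center_iff I).symm
      _ ↔ Ideal.Quotient.mk I.asIdeal a ∈ (⊥ : Subalgebra ℂ (A ⧸ I.asIdeal)) := by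
          rw [Subalgebra.center_eq_bot_of_onlyTrivialClosedIdeals hsimple]
      _ ↔ ∃ (c : ℂ) (z : A), z ∈ I ∧ a = c • (1 : A) + z := Ideal.Quotient.mk_mem_bot_iff I
  refine ⟨hnormalizer, isClosed_setOf_exists_smul_one_add_mem I hcl, fun a ha x => ?_⟩
  rw [← hnormalizer] at ha
  exact ⟨0, _, ha x, by rw [zero_smul, zero_add]⟩
end

section
/- Let H be an infinite dimensional separable Hilbert space. Then the Lie normalizer of the ideal K(H) of compact operators in B(H), namely N(K(H)) = {T ∈ B(H) : TS - ST is compact for all S ∈ B(H)}, equals ℂ·1 + K(H). -/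
/-!
If `T` commutes with every operator modulo compacts, take orthonormal sequences `x`, `y` and a
partial isometry `S` with `S xₙ = yₙ`, `S* yₙ = xₙ`: pairing the compact operator `TS - ST` with
`xₙ` and `yₙ` gives `⟪yₙ, T yₙ⟫ - ⟪xₙ, T xₙ⟫ → 0`. The diagonal along one orthonormal sequence is
bounded, so a subsequence converges to some `c`, and then every diagonal tends to `c`.
Thus `A = T - c` has `⟪xₙ, A xₙ⟫ → 0` along all orthonormal sequences, so for each `ε > 0` the
quadratic form of `A` is `ε`-small on `Fᗮ` for some finite-dimensional `F`. By polarization the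
compression `PAP` of `A` to `Fᗮ` has norm at most `2ε`, while `A - PAP` has finite rank, so `A`
is a norm limit of compact operators.
-/

open Filter Topology ContinuousLinearMap
open scoped InnerProductSpace

section

variable {𝕜 E : Type*} [RCLike 𝕜] [NormedAddCommGroup E] [InnerProductSpace 𝕜 E]

theorem Orthonormal.tendsto_inner_atTop_zero {x : ℕ → E} (hx : Orthonormal 𝕜 x) (w : E) :
    Tendsto (fun n => ⟪x n, w⟫_𝕜) atTop (𝓝 0) := by
  have hsq : Tendsto (fun n => ‖⟪x n, w⟫_𝕜‖ ^ 2) atTop (𝓝 0) :=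
    (hx.inner_products_summable w).tendsto_atTop_zero
  rw [tendsto_zero_iff_norm_tendsto_zero]
  simpa using hsq.sqrt

theorem Orthonormal.isBounded_range {ι : Type*} {x : ι → E} (hx : Orthonormal 𝕜 x) :
    Bornology.IsBounded (Set.range x) :=
  isBounded_iff_forall_norm_le.2 ⟨1, Set.forall_mem_range.2 fun n => (hx.1 n).le⟩

theorem IsCompactOperator.tendsto_inner_atTop_zero {C : E →L[𝕜] E} (hC : IsCompactOperator C)
    {x y : ℕ → E} (hx : Bornology.IsBounded (Set.range x)) (hy : Orthonormal 𝕜 y) :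
    Tendsto (fun n => ⟪y n, C (x n)⟫_𝕜) atTop (𝓝 0) := by
  refine tendsto_of_subseq_tendsto fun ns hns => ?_
  obtain ⟨w, -, φ, hφ, hw⟩ := (hC.isCompact_closure_image_of_bounded hx).tendsto_subseq
    (x := fun k => C (x (ns k))) fun k => subset_closure ⟨x (ns k), ⟨ns k, rfl⟩, rfl⟩
  refine ⟨φ, ((hy.tendsto_inner_atTop_zero w).comp (hns.comp hφ.tendsto_atTop)).congr_dist ?_⟩
  refine squeeze_zero (fun _ => dist_nonneg) (fun k => ?_) (tendsto_iff_dist_tendsto_zero.1 hw)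
  simp only [Function.comp_apply, dist_eq_norm, ← inner_sub_right]
  exact (norm_inner_le_norm _ _).trans_eq (by rw [hy.1, one_mul, norm_sub_rev])

theorem IsCompactOperator.mul_sub_mul {K : E →L[𝕜] E} (hK : IsCompactOperator K)
    (S : E →L[𝕜] E) : IsCompactOperator ⇑(K * S - S * K) :=
  (hK.comp_clm S).sub (hK.clm_comp S)

theorem Submodule.isCompactOperator_starProjection (F : Submodule 𝕜 E)
    [FiniteDimensional 𝕜 F] : IsCompactOperator F.starProjection :=
  (isCompactOperator_of_locallyCompactSpace_dom F.orthogonalProjectionOnto).clm_comp F.subtypeL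

variable [CompleteSpace E]

theorem Orthonormal.exists_clm_lp_single {x : ℕ → E} (hx : Orthonormal 𝕜 x) :
    ∃ L : lp (fun _ : ℕ => 𝕜) 2 →L[𝕜] E, ∀ n, L (lp.single 2 n 1) = x n ∧
      adjoint L (x n) = lp.single 2 n 1 := by
  set L := hx.orthogonalFamily.linearIsometry.toContinuousLinearMap
  have hL : ∀ n, L (lp.single 2 n 1) = x n := fun n => by simp [L]
  refine ⟨L, fun n => ⟨hL n, ?_⟩⟩
  rw [← hL, ← comp_apply, LinearIsometry.adjoint_comp_self, one_apply_eq_self]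

theorem Orthonormal.exists_clm_apply_eq_and_adjoint_apply_eq {x y : ℕ → E}
    (hx : Orthonormal 𝕜 x) (hy : Orthonormal 𝕜 y) :
    ∃ S : E →L[𝕜] E, ∀ n, S (x n) = y n ∧ adjoint S (y n) = x n := by
  obtain ⟨Lx, hLx⟩ := hx.exists_clm_lp_single
  obtain ⟨Ly, hLy⟩ := hy.exists_clm_lp_single
  refine ⟨Ly ∘L adjoint Lx, fun n => ⟨?_, ?_⟩⟩
  · rw [comp_apply, (hLx n).2, (hLy n).1]
  · rw [adjoint_comp, adjoint_adjoint, comp_apply, (hLy n).2, (hLx n).1]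

theorem tendsto_inner_apply_sub_inner_apply_of_commutator_compact {T : E →L[𝕜] E}
    (hT : ∀ S : E →L[𝕜] E, IsCompactOperator ⇑(T * S - S * T)) {x y : ℕ → E}
    (hx : Orthonormal 𝕜 x) (hy : Orthonormal 𝕜 y) :
    Tendsto (fun n => ⟪y n, T (y n)⟫_𝕜 - ⟪x n, T (x n)⟫_𝕜) atTop (𝓝 0) := by
  obtain ⟨S, hS⟩ := hx.exists_clm_apply_eq_and_adjoint_apply_eq hy
  refine ((hT S).tendsto_inner_atTop_zero hx.isBounded_range hy).congr fun n => ?_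
  rw [sub_apply, mul_apply_eq_comp, mul_apply_eq_comp, inner_sub_right, (hS n).1,
    ← adjoint_inner_left S, (hS n).2]

theorem exists_tendsto_inner_apply_of_commutator_compact {T : E →L[𝕜] E}
    (hT : ∀ S : E →L[𝕜] E, IsCompactOperator ⇑(T * S - S * T)) :
    ∃ c : 𝕜, ∀ x : ℕ → E, Orthonormal 𝕜 x →
      Tendsto (fun n => ⟪x n, T (x n)⟫_𝕜) atTop (𝓝 c) := by
  by_cases he : ∃ e : ℕ → E, Orthonormal 𝕜 e
  swap
  · exact ⟨0, fun x hx => (he ⟨x, hx⟩).elim⟩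
  obtain ⟨e, he⟩ := he
  have hbdd : ∀ n, ⟪e n, T (e n)⟫_𝕜 ∈ Metric.closedBall 0 ‖T‖ := fun n => by
    rw [mem_closedBall_zero_iff]
    calc ‖⟪e n, T (e n)⟫_𝕜‖ ≤ ‖e n‖ * (‖T‖ * ‖e n‖) :=
          (norm_inner_le_norm _ _).trans (by gcongr; exact T.le_opNorm _)
      _ = ‖T‖ := by rw [he.1 n]; ring
  obtain ⟨c, -, φ, hφ, hc⟩ := tendsto_subseq_of_bounded Metric.isBounded_closedBall hbdd
  refine ⟨c, fun x hx => ?_⟩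
  simpa using (tendsto_inner_apply_sub_inner_apply_of_commutator_compact hT
    (he.comp φ hφ.injective) hx).add hc

end

section

variable {H : Type*} [NormedAddCommGroup H] [InnerProductSpace ℂ H]

theorem norm_inner_map_le_of_forall_norm_inner_self_le {A : H →L[ℂ] H} {W : Submodule ℂ H}
    {ε : ℝ} (hW : ∀ v ∈ W, ‖⟪v, A v⟫_ℂ‖ ≤ ε * ‖v‖ ^ 2) {v w : H} (hv : v ∈ W) (hw : w ∈ W) :
    ‖⟪A v, w⟫_ℂ‖ ≤ ε * (‖v‖ ^ 2 + ‖w‖ ^ 2) := by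
  have hq : ∀ u ∈ W, ‖⟪A u, u⟫_ℂ‖ ≤ ε * ‖u‖ ^ 2 := fun u hu => by
    rw [norm_inner_symm]
    exact hW u hu
  have h₁ := hq _ (W.add_mem hw hv)
  have h₂ := hq _ (W.sub_mem hw hv)
  have h₃ := hq _ (W.add_mem hw (W.smul_mem Complex.I hv))
  have h₄ := hq _ (W.sub_mem hw (W.smul_mem Complex.I hv))
  have hp₁ := parallelogram_law_with_norm ℂ w v
  have hp₂ := parallelogram_law_with_norm ℂ w (Complex.I • v)
  rw [norm_smul, Complex.norm_I, one_mul] at hp₂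
  have htri : ∀ a b c d : ℂ, ‖(a - b + Complex.I * c - Complex.I * d) / 4‖ ≤
      (‖a‖ + ‖b‖ + ‖c‖ + ‖d‖) / 4 := fun a b c d => by
    rw [norm_div, RCLike.norm_ofNat]
    grw [norm_sub_le, norm_add_le, norm_sub_le]
    simp
  rw [show ⟪A v, w⟫_ℂ = _ from inner_map_polarization (A : H →ₗ[ℂ] H) w v]
  refine (htri _ _ _ _).trans ?_
  simp only [coe_coe]
  linear_combination (h₁ + h₂ + h₃ + h₄ + ε * hp₁ + ε * hp₂) / 4

theorem norm_starProjection_mul_mul_starProjection_le {A : H →L[ℂ] H} (W : Submodule ℂ H)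
    [W.HasOrthogonalProjection] {ε : ℝ} (hε : 0 ≤ ε)
    (hW : ∀ v ∈ W, ‖⟪v, A v⟫_ℂ‖ ≤ ε * ‖v‖ ^ 2) :
    ‖W.starProjection * A * W.starProjection‖ ≤ 2 * ε := by
  refine opNorm_le_of_re_inner_le (by positivity) fun v w hv hw => ?_
  have hPv : ‖W.starProjection v‖ ≤ 1 := hv ▸ W.norm_starProjection_apply_le v
  have hPw : ‖W.starProjection w‖ ≤ 1 := hw ▸ W.norm_starProjection_apply_le w
  calc RCLike.re ⟪(W.starProjection * A * W.starProjection) v, w⟫_ℂ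
      ≤ ‖⟪A (W.starProjection v), W.starProjection w⟫_ℂ‖ := by
        rw [mul_apply_eq_comp, mul_apply_eq_comp, Submodule.inner_starProjection_left_eq_right]
        exact RCLike.re_le_norm _
    _ ≤ ε * (1 ^ 2 + 1 ^ 2) :=
        (norm_inner_map_le_of_forall_norm_inner_self_le hW (W.starProjection_apply_mem v)
          (W.starProjection_apply_mem w)).trans (by gcongr)
    _ = 2 * ε := by ring

theorem exists_finiteDimensional_forall_mem_orthogonal_norm_inner_le {A : H →L[ℂ] H}
    (hA : ∀ x : ℕ → H, Orthonormal ℂ x → Tendsto (fun n => ⟪x n, A (x n)⟫_ℂ) atTop (𝓝 0))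
    {ε : ℝ} (hε : 0 < ε) :
    ∃ F : Submodule ℂ H, FiniteDimensional ℂ F ∧ ∀ v ∈ Fᗮ, ‖⟪v, A v⟫_ℂ‖ ≤ ε * ‖v‖ ^ 2 := by
  by_contra! hF
  obtain ⟨x, hxA, hx⟩ := exists_seq_of_forall_finset_exists
    (fun v => ‖v‖ = 1 ∧ ε ≤ ‖⟪v, A v⟫_ℂ‖) (fun u v => ⟪u, v⟫_ℂ = 0) fun s _ => by
      obtain ⟨v, hv, hεv⟩ := hF (Submodule.span ℂ s) (FiniteDimensional.span_finset ℂ s)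
      have hv0 : v ≠ 0 := by
        rintro rfl
        simp at hεv
      have hvpos : 0 < ‖v‖ := norm_pos_iff.2 hv0
      refine ⟨(‖v‖⁻¹ : ℂ) • v, ⟨?_, ?_⟩, fun u hu => ?_⟩
      · simp [norm_smul, hv0]
      · simp only [map_smul, inner_smul_left, inner_smul_right, norm_mul, RCLike.norm_conj,
          norm_inv, Complex.norm_real, norm_norm]
        field_simp
        linarith
      · exact Submodule.inner_right_of_mem_orthogonal (Submodule.subset_span hu)
          (Submodule.smul_mem _ _ hv)
  have horth : Orthonormal ℂ x := ⟨fun n => (hxA n).1, fun m n hmn => by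
    rcases hmn.lt_or_gt with h | h
    · exact hx m n h
    · rw [inner_eq_zero_symm]
      exact hx n m h⟩
  obtain ⟨n, hn⟩ :=
    ((tendsto_zero_iff_norm_tendsto_zero.1 (hA x horth)).eventually (gt_mem_nhds hε)).exists
  exact (hxA n).2.not_gt hn

theorem isCompactOperator_of_forall_orthonormal_tendsto_inner [CompleteSpace H] {A : H →L[ℂ] H}
    (hA : ∀ x : ℕ → H, Orthonormal ℂ x → Tendsto (fun n => ⟪x n, A (x n)⟫_ℂ) atTop (𝓝 0)) :
    IsCompactOperator A := by
  refine isClosed_setOfPred_isCompactOperator.closure_subset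
    (Metric.mem_closure_iff.2 fun ε hε => ?_)
  obtain ⟨F, _, hFA⟩ :=
    exists_finiteDimensional_forall_mem_orthogonal_norm_inner_le hA (by positivity : 0 < ε / 4)
  set P := Fᗮ.starProjection
  have hQ := F.isCompactOperator_starProjection
  refine ⟨A - P * A * P, ?_, ?_⟩
  · have hsplit : A - P * A * P = F.starProjection * A + P * A * F.starProjection := by
      rw [show P = 1 - F.starProjection from F.starProjection_orthogonal']
      noncomm_ring
    rw [Set.mem_ofPred_eq, hsplit]
    exact (hQ.comp_clm A).add (hQ.clm_comp (P * A))
  · rw [dist_eq_norm, sub_sub_cancel]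
    linarith [norm_starProjection_mul_mul_starProjection_le Fᗮ (by positivity) hFA]

end

theorem lieNormalizer_compactOperators_general
    (H : Type*) [NormedAddCommGroup H] [InnerProductSpace ℂ H] [CompleteSpace H] :
    {T : H →L[ℂ] H | ∀ S : H →L[ℂ] H, IsCompactOperator ⇑(T * S - S * T)} =
      {T : H →L[ℂ] H | ∃ (c : ℂ) (K : H →L[ℂ] H), IsCompactOperator ⇑K ∧
        T = c • (1 : H →L[ℂ] H) + K} := by
  ext T
  refine ⟨fun hT => ?_, ?_⟩
  · obtain ⟨c, hc⟩ := exists_tendsto_inner_apply_of_commutator_compact hT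
    refine ⟨c, T - c • 1, isCompactOperator_of_forall_orthonormal_tendsto_inner fun x hx => ?_,
      (add_sub_cancel _ _).symm⟩
    have hA := (hc x hx).sub_const c
    rw [sub_self] at hA
    refine hA.congr fun n => ?_
    simp [inner_self_eq_norm_sq_to_K, hx.1 n]
  · rintro ⟨c, K, hK, rfl⟩ S
    have hcomm : (c • 1 + K) * S - S * (c • 1 + K) = K * S - S * K := by
      simp only [add_mul, mul_add, smul_mul_assoc, mul_smul_comm, one_mul, mul_one]
      abel
    rw [hcomm]
    exact hK.mul_sub_mul S

/-- For an infinite dimensional separable Hilbert space `H`, the Lie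
normalizer of `K(H)` in `B(H)` is `ℂ·1 + K(H)`. -/
theorem lieNormalizer_compactOperators
    (H : Type*) [NormedAddCommGroup H] [InnerProductSpace ℂ H] [CompleteSpace H]
    [TopologicalSpace.SeparableSpace H] (hinf : ¬ FiniteDimensional ℂ H) :
    {T : H →L[ℂ] H | ∀ S : H →L[ℂ] H, IsCompactOperator ⇑(T * S - S * T)} =
      {T : H →L[ℂ] H | ∃ (c : ℂ) (K : H →L[ℂ] H), IsCompactOperator ⇑K ∧
        T = c • (1 : H →L[ℂ] H) + K} :=
  lieNormalizer_compactOperators_general H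
end

section
/- Let A and B be Banach algebras with B unital, and suppose A admits no tracial functionals (equivalently, the closed span of commutators of A is all of A). Let ‖·‖_α be any algebra norm on A ⊗ B and A ⊗^α B its completion. Then the closed linear span of commutators [A ⊗^α B, A ⊗^α B] equals A ⊗^α B; in particular A ⊗^α B admits no tracial functionals. -/
open scoped TensorProduct

/-- Let `A` and `B` be Banach algebras with `B` unital, and suppose `A` admits
no tracial functionals, i.e. the closed span of commutators of `A` is all of `A`.  If
`N = ‖·‖_α` is any algebra (cross) norm on `A ⊗ B`, then the span of commutators of
`A ⊗ B` is `N`-dense in `A ⊗ B` (equivalently, the closed span of commutators of the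
completion `A ⊗^α B` is everything), and consequently `A ⊗ B` admits no `N`-continuous
tracial functionals. -/
theorem span_commutators_dense_of_no_tracial_functional
    (A B : Type*)
    [NonUnitalNormedRing A] [NormedSpace ℂ A] [SMulCommClass ℂ A A] [IsScalarTower ℂ A A]
    [NormedRing B] [NormedAlgebra ℂ B]
    (hA : closure (Submodule.span ℂ {z : A | ∃ x y : A, z = x * y - y * x} : Set A)
      = Set.univ)
    (N : A ⊗[ℂ] B → ℝ)
    (hN0 : ∀ x, N x = 0 ↔ x = 0)
    (hNadd : ∀ x y, N (x + y) ≤ N x + N y)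
    (hNsmul : ∀ (c : ℂ) x, N (c • x) = ‖c‖ * N x)
    (hNmul : ∀ x y, N (x * y) ≤ N x * N y)
    (hNcross : ∀ (a : A) (b : B), N (a ⊗ₜ[ℂ] b) = ‖a‖ * ‖b‖) :
    (∀ (x : A ⊗[ℂ] B) (ε : ℝ), 0 < ε →
      ∃ y ∈ Submodule.span ℂ {z : A ⊗[ℂ] B | ∃ u v : A ⊗[ℂ] B, z = u * v - v * u},
        N (x - y) < ε) ∧
    ¬ ∃ φ : (A ⊗[ℂ] B) →ₗ[ℂ] ℂ, φ ≠ 0 ∧ (∃ Cφ : ℝ, ∀ x, ‖φ x‖ ≤ Cφ * N x) ∧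
        ∀ x y : A ⊗[ℂ] B, φ (x * y) = φ (y * x) := by
  set S := Submodule.span ℂ {z : A ⊗[ℂ] B | ∃ u v : A ⊗[ℂ] B, z = u * v - v * u} with hS
  -- N is nonnegative
  have hNneg : ∀ x : A ⊗[ℂ] B, N (-x) = N x := by
    intro x
    have := hNsmul (-1 : ℂ) x
    simpa using this
  have hNzero : N 0 = 0 := (hN0 0).mpr rfl
  have hNnonneg : ∀ x : A ⊗[ℂ] B, 0 ≤ N x := by
    intro x
    have h := hNadd x (-x)
    rw [add_neg_cancel, hNzero, hNneg] at h
    linarith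
  -- tensoring span of commutators of A with b lands in S
  have key : ∀ y ∈ Submodule.span ℂ {z : A | ∃ x y : A, z = x * y - y * x},
      ∀ b : B, y ⊗ₜ[ℂ] b ∈ S := by
    intro y hy b
    induction hy using Submodule.span_induction with
    | mem z hz =>
      obtain ⟨u, v, rfl⟩ := hz
      have : (u * v - v * u) ⊗ₜ[ℂ] b
          = (u ⊗ₜ[ℂ] b) * (v ⊗ₜ[ℂ] (1 : B)) - (v ⊗ₜ[ℂ] (1 : B)) * (u ⊗ₜ[ℂ] b) := by
        simp [Algebra.TensorProduct.tmul_mul_tmul, TensorProduct.sub_tmul]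
      rw [this]
      exact Submodule.subset_span ⟨_, _, rfl⟩
    | zero => simp
    | add u v _ _ hu hv =>
      rw [TensorProduct.add_tmul]; exact S.add_mem hu hv
    | smul c u _ hu =>
      rw [← TensorProduct.smul_tmul']; exact S.smul_mem c hu
  -- density part
  have dense : ∀ (x : A ⊗[ℂ] B) (ε : ℝ), 0 < ε → ∃ y ∈ S, N (x - y) < ε := by
    intro x
    induction x using TensorProduct.induction_on with
    | zero =>
      intro ε hε
      exact ⟨0, S.zero_mem, by simpa [hNzero] using hε⟩
    | tmul a b =>
      intro ε hε
      have hb1 : (0:ℝ) < ‖b‖ + 1 := by positivity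
      have ha : a ∈ closure (Submodule.span ℂ {z : A | ∃ x y : A, z = x * y - y * x} : Set A) := by
        rw [hA]; trivial
      rw [Metric.mem_closure_iff] at ha
      obtain ⟨y, hy, hdist⟩ := ha (ε / (‖b‖ + 1)) (by positivity)
      refine ⟨y ⊗ₜ[ℂ] b, key y hy b, ?_⟩
      have : a ⊗ₜ[ℂ] b - y ⊗ₜ[ℂ] b = (a - y) ⊗ₜ[ℂ] b := by
        rw [TensorProduct.sub_tmul]
      rw [this, hNcross]
      have h1 : ‖a - y‖ < ε / (‖b‖ + 1) := by
        rw [dist_eq_norm] at hdist; exact hdist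
      have h2 : ‖a - y‖ * ‖b‖ ≤ ‖a - y‖ * (‖b‖ + 1) :=
        mul_le_mul_of_nonneg_left (by linarith) (norm_nonneg _)
      calc ‖a - y‖ * ‖b‖ ≤ ‖a - y‖ * (‖b‖ + 1) := h2
        _ < (ε / (‖b‖ + 1)) * (‖b‖ + 1) := by
            exact mul_lt_mul_of_pos_right h1 hb1
        _ = ε := by field_simp
    | add u v hu hv =>
      intro ε hε
      obtain ⟨yu, hyu, hu'⟩ := hu (ε / 2) (by positivity)
      obtain ⟨yv, hyv, hv'⟩ := hv (ε / 2) (by positivity)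
      refine ⟨yu + yv, S.add_mem hyu hyv, ?_⟩
      have heq : u + v - (yu + yv) = (u - yu) + (v - yv) := by abel
      calc N (u + v - (yu + yv)) = N ((u - yu) + (v - yv)) := by rw [heq]
        _ ≤ N (u - yu) + N (v - yv) := hNadd _ _
        _ < ε / 2 + ε / 2 := by linarith
        _ = ε := by ring
  refine ⟨dense, ?_⟩
  rintro ⟨φ, hφne, ⟨Cφ, hC⟩, htr⟩
  -- φ vanishes on S
  have hφS : ∀ y ∈ S, φ y = 0 := by
    intro y hy
    induction hy using Submodule.span_induction with
    | mem z hz =>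
      obtain ⟨u, v, rfl⟩ := hz
      simp [map_sub, htr u v]
    | zero => simp
    | add u v _ _ hu hv => simp [hu, hv]
    | smul c u _ hu => simp [hu]
  -- φ vanishes everywhere
  have hφ0 : ∀ x : A ⊗[ℂ] B, φ x = 0 := by
    intro x
    have : ∀ δ : ℝ, 0 < δ → ‖φ x‖ < δ := by
      intro δ hδ
      obtain ⟨y, hy, hN⟩ := dense x (δ / (|Cφ| + 1)) (by positivity)
      have : φ x = φ (x - y) := by rw [map_sub, hφS y hy, sub_zero]
      rw [this]
      calc ‖φ (x - y)‖ ≤ Cφ * N (x - y) := hC _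
        _ ≤ |Cφ| * N (x - y) := mul_le_mul_of_nonneg_right (le_abs_self _) (hNnonneg _)
        _ ≤ (|Cφ| + 1) * N (x - y) := by
            have := hNnonneg (x - y); nlinarith
        _ < (|Cφ| + 1) * (δ / (|Cφ| + 1)) := by
            have : (0:ℝ) < |Cφ| + 1 := by positivity
            exact mul_lt_mul_of_pos_left hN this
        _ = δ := by field_simp
    by_contra hne
    have hpos : 0 < ‖φ x‖ := norm_pos_iff.mpr hne
    exact lt_irrefl _ (this _ hpos)
  exact hφne (LinearMap.ext fun x => by simp [hφ0 x])
end

section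
/- Let A and B be C*-algebras and suppose B admits no tracial states, so that the closed linear span of commutators [B,B] is all of B. Then for any a ≥ 0 in A and b, b' ∈ B, one has a ⊗ [b,b'] = [a^{1/2} ⊗ b, a^{1/2} ⊗ b'] in the algebraic tensor product A ⊗ B; consequently, for any algebra norm ‖·‖_α, the closed span of commutators of A ⊗^α B is all of A ⊗^α B. -/
/-!
Writing `a ≥ 0` as `s * s`, the identity `a ⊗ ⁅b, b'⁆ = ⁅s ⊗ b, s ⊗ b'⁆` puts `a ⊗ z` in the
commutator span of `A ⊗ B` whenever `z` is in that of `B`; as the positive elements span a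
C*-algebra, this holds for every `a`. The cross-norm property bounds `N (a ⊗ b - a ⊗ c)` by
`‖a‖ * ‖b - c‖`, so pure tensors are approximated from the dense commutator span of `B`, and
subadditivity passes this on to finite sums of pure tensors.
-/

open TensorProduct Submodule

section Commutators

variable (R A : Type*) [CommRing R] [NonUnitalRing A] [Module R A]

def commutatorSpan : Submodule R A :=
  span R {z | ∃ x y : A, z = ⁅x, y⁆}

variable {R A} {B : Type*} [NonUnitalRing B] [Module R B]
  [SMulCommClass R A A] [IsScalarTower R A A] [SMulCommClass R B B] [IsScalarTower R B B]

theorem mul_self_tmul_lie (s : A) (b b' : B) :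
    (s * s) ⊗ₜ[R] ⁅b, b'⁆ = ⁅s ⊗ₜ[R] b, s ⊗ₜ[R] b'⁆ := by
  simp only [Ring.lie_def, Algebra.TensorProduct.tmul_mul_tmul, tmul_sub]

theorem tmul_mem_commutatorSpan {a : A} (ha : a ∈ span R {a | IsSquare a}) {z : B}
    (hz : z ∈ commutatorSpan R B) : a ⊗ₜ[R] z ∈ commutatorSpan R (A ⊗[R] B) := by
  suffices map₂ (mk R A B) (span R {a | IsSquare a}) (commutatorSpan R B) ≤
      commutatorSpan R (A ⊗[R] B) from this (apply_mem_map₂ _ ha hz)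
  rw [commutatorSpan, map₂_span_span, span_le]
  rintro _ ⟨_, ⟨s, rfl⟩, _, ⟨b, b', rfl⟩, rfl⟩
  exact subset_span ⟨_, _, mul_self_tmul_lie s b b'⟩

end Commutators

theorem CStarAlgebra.span_isSquare {A : Type*} [NonUnitalCStarAlgebra A] [PartialOrder A]
    [StarOrderedRing A] : span ℂ {a : A | IsSquare a} = ⊤ :=
  eq_top_iff.2 <| CStarAlgebra.span_nonneg.symm.le.trans <| span_mono fun a ha =>
    ⟨CFC.sqrt a, (CFC.sqrt_mul_sqrt_self a ha).symm⟩

section Approximation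

variable {R A B : Type*} [CommRing R] [SeminormedAddCommGroup A] [SeminormedAddCommGroup B]
  [Module R A] [Module R B] {N : A ⊗[R] B → ℝ}

theorem exists_tmul_sub_tmul_lt (hN : ∀ a b, N (a ⊗ₜ b) ≤ ‖a‖ * ‖b‖) {D : Set B} (hD : Dense D)
    (a : A) (b : B) {ε : ℝ} (hε : 0 < ε) : ∃ c ∈ D, N (a ⊗ₜ b - a ⊗ₜ c) < ε := by
  obtain ⟨c, hcD, hc⟩ := hD.exists_mem_open (isOpen_lt (by fun_prop) continuous_const)
    (⟨b, by simpa using hε⟩ : {c : B | ‖a‖ * ‖b - c‖ < ε}.Nonempty)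
  exact ⟨c, hcD, by rw [← tmul_sub]; exact (hN a (b - c)).trans_lt hc⟩

theorem exists_mem_sub_lt_of_forall_tmul_mem (hNadd : ∀ x y, N (x + y) ≤ N x + N y)
    (hN : ∀ a b, N (a ⊗ₜ b) ≤ ‖a‖ * ‖b‖) {S : AddSubmonoid (A ⊗[R] B)} {D : Set B}
    (hD : Dense D) (hS : ∀ a, ∀ c ∈ D, a ⊗ₜ c ∈ S) (x : A ⊗[R] B) {ε : ℝ} (hε : 0 < ε) :
    ∃ y ∈ S, N (x - y) < ε := by
  induction x using TensorProduct.induction_on generalizing ε with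
  | zero => exact ⟨0, S.zero_mem, by simpa using (hN 0 0).trans_lt (by simpa using hε)⟩
  | tmul a b =>
    obtain ⟨c, hcD, hc⟩ := exists_tmul_sub_tmul_lt hN hD a b hε
    exact ⟨a ⊗ₜ c, hS a c hcD, hc⟩
  | add u v hu hv =>
    obtain ⟨y, hyS, hy⟩ := hu (half_pos hε)
    obtain ⟨y', hy'S, hy'⟩ := hv (half_pos hε)
    refine ⟨y + y', S.add_mem hyS hy'S, ?_⟩
    calc N (u + v - (y + y')) = N ((u - y) + (v - y')) := by rw [add_sub_add_comm]
      _ ≤ N (u - y) + N (v - y') := hNadd _ _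
      _ < ε := by linarith

end Approximation

theorem tmul_commutator_and_span_commutators_dense_general
    (A B : Type*)
    [NonUnitalNormedRing A] [StarRing A] [CStarRing A] [NormedSpace ℂ A]
    [IsScalarTower ℂ A A] [SMulCommClass ℂ A A] [StarModule ℂ A] [CompleteSpace A]
    [PartialOrder A] [StarOrderedRing A]
    [NonUnitalNormedRing B] [NormedSpace ℂ B]
    [IsScalarTower ℂ B B] [SMulCommClass ℂ B B]
    (hB : closure (Submodule.span ℂ {z : B | ∃ x y : B, z = x * y - y * x} : Set B)
      = Set.univ)
    (N : A ⊗[ℂ] B → ℝ)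
    (hNadd : ∀ x y, N (x + y) ≤ N x + N y)
    (hNcross : ∀ (a : A) (b : B), N (a ⊗ₜ[ℂ] b) = ‖a‖ * ‖b‖) :
    (∀ a : A, 0 ≤ a → ∀ s : A, 0 ≤ s → s * s = a → ∀ b b' : B,
      a ⊗ₜ[ℂ] (b * b' - b' * b)
        = (s ⊗ₜ[ℂ] b) * (s ⊗ₜ[ℂ] b') - (s ⊗ₜ[ℂ] b') * (s ⊗ₜ[ℂ] b)) ∧
    ∀ (x : A ⊗[ℂ] B) (ε : ℝ), 0 < ε →
      ∃ y ∈ Submodule.span ℂ {z : A ⊗[ℂ] B | ∃ u v : A ⊗[ℂ] B, z = u * v - v * u},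
        N (x - y) < ε := by
  let _ : NonUnitalCStarAlgebra A := {}
  refine ⟨fun a _ s _ hsa b b' => hsa ▸ mul_self_tmul_lie s b b', fun x ε hε => ?_⟩
  have hdense : Dense (commutatorSpan ℂ B : Set B) := dense_iff_closure_eq.2 hB
  have htmul (a : A) (c : B) (hc : c ∈ commutatorSpan ℂ B) :
      a ⊗ₜ c ∈ commutatorSpan ℂ (A ⊗[ℂ] B) :=
    tmul_mem_commutatorSpan (CStarAlgebra.span_isSquare (A := A) ▸ mem_top) hc
  exact exists_mem_sub_lt_of_forall_tmul_mem hNadd (fun a b => (hNcross a b).le) hdense htmul x hε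

/-- Let `A` and `B` be C*-algebras and suppose `B` admits no tracial states,
so that the closed span of commutators of `B` is all of `B`.  Then for `a ≥ 0` in `A`
with positive square root `s` (`0 ≤ s`, `s * s = a`) and `b, b' ∈ B` one has
`a ⊗ [b,b'] = [s ⊗ b, s ⊗ b']` in `A ⊗ B`; consequently, for any algebra (cross) norm
`N` on `A ⊗ B`, the span of commutators is `N`-dense in `A ⊗ B`, i.e. the closed span of
commutators of `A ⊗^α B` is all of it. -/
theorem tmul_commutator_and_span_commutators_dense
    (A B : Type*)
    [NonUnitalNormedRing A] [StarRing A] [CStarRing A] [NormedSpace ℂ A]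
    [IsScalarTower ℂ A A] [SMulCommClass ℂ A A] [StarModule ℂ A] [CompleteSpace A]
    [PartialOrder A] [StarOrderedRing A]
    [NonUnitalNormedRing B] [StarRing B] [CStarRing B] [NormedSpace ℂ B]
    [IsScalarTower ℂ B B] [SMulCommClass ℂ B B] [StarModule ℂ B] [CompleteSpace B]
    (hB : closure (Submodule.span ℂ {z : B | ∃ x y : B, z = x * y - y * x} : Set B)
      = Set.univ)
    (N : A ⊗[ℂ] B → ℝ)
    (hN0 : ∀ x, N x = 0 ↔ x = 0)
    (hNadd : ∀ x y, N (x + y) ≤ N x + N y)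
    (hNsmul : ∀ (c : ℂ) x, N (c • x) = ‖c‖ * N x)
    (hNmul : ∀ x y, N (x * y) ≤ N x * N y)
    (hNcross : ∀ (a : A) (b : B), N (a ⊗ₜ[ℂ] b) = ‖a‖ * ‖b‖) :
    (∀ a : A, 0 ≤ a → ∀ s : A, 0 ≤ s → s * s = a → ∀ b b' : B,
      a ⊗ₜ[ℂ] (b * b' - b' * b)
        = (s ⊗ₜ[ℂ] b) * (s ⊗ₜ[ℂ] b') - (s ⊗ₜ[ℂ] b') * (s ⊗ₜ[ℂ] b)) ∧
    ∀ (x : A ⊗[ℂ] B) (ε : ℝ), 0 < ε →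
      ∃ y ∈ Submodule.span ℂ {z : A ⊗[ℂ] B | ∃ u v : A ⊗[ℂ] B, z = u * v - v * u},
        N (x - y) < ε :=
  tmul_commutator_and_span_commutators_dense_general A B hB N hNadd hNcross
end

section
/- Let A be a Banach algebra with a bounded approximate identity, ‖·‖_α a cross algebra norm on tensor products with matrix algebras, and B a closed subspace of A. Then the subspace B ⊗ M_k of A ⊗^α M_k is complete (hence closed). Moreover, each coordinate map A ⊗ M_k → A, Σ_{ij} a_{ij} ⊗ E_{ij} ↦ a_{ij}, is continuous with norm at most M², where M is a bound for the approximate identity. -/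
/-!
Sandwiching a matrix `x` between `E_ii ⊗ e` and `E_jj ⊗ e` isolates the entry: the product is
`E_ij ⊗ e x_ij e`, whose norm is at most `‖e‖² N(x) ≤ M² N(x)` by submultiplicativity and the
cross property. Letting `e` run through the approximate identity, `e x_ij e → x_ij`, so every
entry is controlled by `M² N(x)`. Conversely `N(x) ≤ ∑ ‖x_ij‖` by the triangle inequality, so
`N` is equivalent to the entrywise norm, and completeness follows from that of `A` (and of `B`,
being closed) entry by entry.
-/

open Filter Topology Matrix

section BoundedApproxUnit

variable {A : Type*} [NonUnitalSeminormedRing A] {ι : Type*} {l : Filter ι} {e : ι → A} {M : ℝ}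

theorem tendsto_mul_mul_of_boundedApproxUnit (heM : ∀ t, ‖e t‖ ≤ M)
    (hel : ∀ a, Tendsto (fun t => e t * a) l (𝓝 a))
    (her : ∀ a, Tendsto (fun t => a * e t) l (𝓝 a)) (a : A) :
    Tendsto (fun t => e t * a * e t) l (𝓝 a) := by
  rw [tendsto_iff_norm_sub_tendsto_zero]
  have hle : ∀ t, ‖e t * a * e t - a‖ ≤ M * ‖a * e t - a‖ + ‖e t * a - a‖ := fun t =>
    calc ‖e t * a * e t - a‖ = ‖e t * (a * e t - a) + (e t * a - a)‖ := by noncomm_ring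
      _ ≤ ‖e t‖ * ‖a * e t - a‖ + ‖e t * a - a‖ := norm_add_le_of_le (norm_mul_le _ _) le_rfl
      _ ≤ M * ‖a * e t - a‖ + ‖e t * a - a‖ := by gcongr; exact heM t
  have hlim : Tendsto (fun t => M * ‖a * e t - a‖ + ‖e t * a - a‖) l (𝓝 0) := by
    simpa using ((tendsto_iff_norm_sub_tendsto_zero.1 (her a)).const_mul M).add
      (tendsto_iff_norm_sub_tendsto_zero.1 (hel a))
  exact squeeze_zero (fun _ => norm_nonneg _) hle hlim

end BoundedApproxUnit

namespace Matrix

variable {n : Type*} [Fintype n] [DecidableEq n]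

section Ring

variable {A : Type*} [NonUnitalSeminormedRing A] (p : RingSeminorm (Matrix n n A))
  (hsingle : ∀ (a : A) i j, p (single i j a) = ‖a‖)
include hsingle

theorem norm_mul_apply_mul_le (a b : A) (x : Matrix n n A) (i j : n) :
    ‖a * x i j * b‖ ≤ ‖a‖ * p x * ‖b‖ := by
  rw [← hsingle, ← single_mul_mul_single, ← hsingle a i i, ← hsingle b j j]
  exact (map_mul_le_mul p _ _).trans (by gcongr; exact map_mul_le_mul p _ _)

theorem norm_apply_le_sq_mul_of_boundedApproxUnit {ι : Type*} {l : Filter ι} [l.NeBot]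
    {e : ι → A} {M : ℝ} (heM : ∀ t, ‖e t‖ ≤ M)
    (hel : ∀ a, Tendsto (fun t => e t * a) l (𝓝 a))
    (her : ∀ a, Tendsto (fun t => a * e t) l (𝓝 a)) (x : Matrix n n A) (i j : n) :
    ‖x i j‖ ≤ M ^ 2 * p x := by
  obtain ⟨t₀⟩ := nonempty_of_neBot l
  have hM : 0 ≤ M := (norm_nonneg _).trans (heM t₀)
  have hbound : ∀ t, ‖e t * x i j * e t‖ ≤ M ^ 2 * p x := fun t =>
    calc ‖e t * x i j * e t‖ ≤ ‖e t‖ * p x * ‖e t‖ := norm_mul_apply_mul_le p hsingle _ _ x i j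
      _ ≤ M * p x * M := by gcongr <;> exact heM t
      _ = M ^ 2 * p x := by ring
  exact le_of_tendsto (tendsto_mul_mul_of_boundedApproxUnit heM hel her _).norm
    (Eventually.of_forall hbound)

end Ring

section Group

variable {A : Type*} [SeminormedAddCommGroup A] (p : AddGroupSeminorm (Matrix n n A))
  (hsingle : ∀ (a : A) i j, p (single i j a) = ‖a‖)
include hsingle

theorem apply_le_sum_norm_apply (x : Matrix n n A) : p x ≤ ∑ i, ∑ j, ‖x i j‖ := by
  conv_lhs => rw [matrix_eq_sum_single x]
  refine (Finset.le_sum_of_subadditive p (map_zero p).le (map_add_le_add p) _ _).trans ?_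
  gcongr with i
  exact (Finset.le_sum_of_subadditive p (map_zero p).le (map_add_le_add p) _ _).trans
    (by simp only [hsingle, le_rfl])

theorem exists_tendsto_of_cauchy [CompleteSpace A] {C : ℝ}
    (hentry : ∀ (x : Matrix n n A) i j, ‖x i j‖ ≤ C * p x) {S : Set A} (hS : IsClosed S)
    (u : ℕ → Matrix n n A) (hu : ∀ m i j, u m i j ∈ S)
    (hcauchy : Tendsto (fun mn : ℕ × ℕ => p (u mn.1 - u mn.2)) atTop (𝓝 0)) :
    ∃ x : Matrix n n A, (∀ i j, x i j ∈ S) ∧ Tendsto (fun m => p (u m - x)) atTop (𝓝 0) := by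
  have hentry_cauchy : ∀ i j, CauchySeq (fun m => u m i j) := fun i j => by
    rw [cauchySeq_iff_tendsto_dist_atTop_0]
    refine squeeze_zero (fun _ => dist_nonneg) (fun mn => ?_) (by simpa using hcauchy.const_mul C)
    simpa only [dist_eq_norm, sub_apply] using hentry (u mn.1 - u mn.2) i j
  choose x hx using fun i j => cauchySeq_tendsto_of_complete (hentry_cauchy i j)
  refine ⟨of x, fun i j => hS.mem_of_tendsto (hx i j) (Eventually.of_forall (hu · i j)), ?_⟩
  have hsum : Tendsto (fun m => ∑ i, ∑ j, ‖u m i j - x i j‖) atTop (𝓝 0) := by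
    simpa using tendsto_finsetSum _ fun i _ => tendsto_finsetSum _ fun j _ =>
      tendsto_iff_norm_sub_tendsto_zero.1 (hx i j)
  exact squeeze_zero (fun _ => apply_nonneg p _)
    (fun m => (apply_le_sum_norm_apply p hsingle _).trans_eq (by simp)) hsum

end Group

end Matrix

theorem matrix_subspace_complete_of_boundedApproximateIdentity_general
    (A : Type*) [NonUnitalNormedRing A] [NormedSpace ℂ A]
    [CompleteSpace A]
    (ι : Type*) [Nonempty ι] [SemilatticeSup ι] (e : ι → A) (M : ℝ)
    (heM : ∀ l, ‖e l‖ ≤ M)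
    (hel : ∀ a : A, Filter.Tendsto (fun l => e l * a) Filter.atTop (nhds a))
    (her : ∀ a : A, Filter.Tendsto (fun l => a * e l) Filter.atTop (nhds a))
    (k : ℕ)
    (N : Matrix (Fin k) (Fin k) A → ℝ)
    (hNadd : ∀ x y, N (x + y) ≤ N x + N y)
    (hNsmul : ∀ (c : ℂ) x, N (c • x) = ‖c‖ * N x)
    (hNmul : ∀ x y, N (x * y) ≤ N x * N y)
    (hNcross : ∀ (a : A) (i j : Fin k), N (Matrix.single i j a) = ‖a‖)
    (B : Submodule ℂ A) (hB : IsClosed (B : Set A)) :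
    (∀ (x : Matrix (Fin k) (Fin k) A) (i j : Fin k), ‖x i j‖ ≤ M ^ 2 * N x) ∧
    ∀ u : ℕ → Matrix (Fin k) (Fin k) A,
      (∀ m i j, u m i j ∈ B) →
      (∀ ε : ℝ, 0 < ε → ∃ n₀ : ℕ, ∀ m n : ℕ, n₀ ≤ m → n₀ ≤ n → N (u m - u n) < ε) →
      ∃ x : Matrix (Fin k) (Fin k) A, (∀ i j, x i j ∈ B) ∧
        Filter.Tendsto (fun m => N (u m - x)) Filter.atTop (nhds 0) := by
  let p : RingSeminorm (Matrix (Fin k) (Fin k) A) :=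
    { (Seminorm.of N hNadd hNsmul).toAddGroupSeminorm with mul_le' := hNmul }
  have hentry := norm_apply_le_sq_mul_of_boundedApproxUnit p hNcross heM hel her
  refine ⟨hentry, fun u hu hcauchy => ?_⟩
  refine exists_tendsto_of_cauchy p.toAddGroupSeminorm hNcross hentry hB u hu ?_
  rw [Metric.tendsto_atTop]
  intro ε hε
  obtain ⟨n₀, hn₀⟩ := hcauchy ε hε
  refine ⟨(n₀, n₀), fun mn hmn => ?_⟩
  rw [Real.dist_0_eq_abs, abs_of_nonneg (apply_nonneg _ _)]
  exact hn₀ _ _ hmn.1 hmn.2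

/-- Let `A` be a Banach algebra with a bounded approximate identity
`(e_l)` bounded by `M`, and let `N = ‖·‖_α` be a cross algebra norm on `A ⊗ M_k`
(identified with `k × k` matrices over `A`, with `a ⊗ E_{ij}` being the matrix
`stdBasisMatrix i j a`).  Then each coordinate map is continuous with norm at most `M²`,
and for every closed subspace `B` of `A` the subspace `B ⊗ M_k` is complete: every
`N`-Cauchy sequence of matrices with entries in `B` converges in `N` to a matrix with
entries in `B`. -/
theorem matrix_subspace_complete_of_boundedApproximateIdentity
    (A : Type*) [NonUnitalNormedRing A] [NormedSpace ℂ A]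
    [IsScalarTower ℂ A A] [SMulCommClass ℂ A A] [CompleteSpace A]
    (ι : Type*) [Nonempty ι] [SemilatticeSup ι] (e : ι → A) (M : ℝ)
    (heM : ∀ l, ‖e l‖ ≤ M)
    (hel : ∀ a : A, Filter.Tendsto (fun l => e l * a) Filter.atTop (nhds a))
    (her : ∀ a : A, Filter.Tendsto (fun l => a * e l) Filter.atTop (nhds a))
    (k : ℕ)
    (N : Matrix (Fin k) (Fin k) A → ℝ)
    (hN0 : ∀ x, N x = 0 ↔ x = 0)
    (hNadd : ∀ x y, N (x + y) ≤ N x + N y)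
    (hNsmul : ∀ (c : ℂ) x, N (c • x) = ‖c‖ * N x)
    (hNmul : ∀ x y, N (x * y) ≤ N x * N y)
    (hNcross : ∀ (a : A) (i j : Fin k), N (Matrix.single i j a) = ‖a‖)
    (B : Submodule ℂ A) (hB : IsClosed (B : Set A)) :
    (∀ (x : Matrix (Fin k) (Fin k) A) (i j : Fin k), ‖x i j‖ ≤ M ^ 2 * N x) ∧
    ∀ u : ℕ → Matrix (Fin k) (Fin k) A,
      (∀ m i j, u m i j ∈ B) →
      (∀ ε : ℝ, 0 < ε → ∃ n₀ : ℕ, ∀ m n : ℕ, n₀ ≤ m → n₀ ≤ n → N (u m - u n) < ε) →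
      ∃ x : Matrix (Fin k) (Fin k) A, (∀ i j, x i j ∈ B) ∧
        Filter.Tendsto (fun m => N (u m - x)) Filter.atTop (nhds 0) :=
  matrix_subspace_complete_of_boundedApproximateIdentity_general A ι e M heM hel her k N hNadd
    hNsmul hNmul hNcross B hB
end

section
/- Let A be a simple unital C*-algebra, X a locally compact Hausdorff space, and I a closed two-sided ideal of C₀(X, A), necessarily of the form J̃(F) = {f : f|_F = 0} for a closed set F ⊆ X. Then the Lie normalizer N(I) = {f ∈ C₀(X,A) : [f, g] ∈ I for all g ∈ C₀(X,A)} equals I + {x ↦ h(x)·1 : h ∈ C₀(X)}. -/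
/-!
On `F` the condition says that `f x` commutes with every value `g x`, and these exhaust `A`
(Urysohn), so `f x` is central. In a topologically simple complex Banach algebra every central
`z` is a scalar: for `c ∈ σ(z)` the closure of `(c - z) * A` is a closed two-sided ideal, and
it cannot contain `1` because the units are open and a central element with a right inverse
is a unit; hence it is zero and `z = c`. Finally, for a functional `φ` with `φ 1 = 1`,
`h := φ ∘ f` and `j := f - h • 1` give the decomposition, since `f = h • 1` on `F`.
-/

open scoped ZeroAtInfty

namespace TwoSidedIdeal

variable {R : Type*} [Ring R]

def principalOfMemCenter (z : R) (hz : z ∈ Set.center R) : TwoSidedIdeal R :=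
  .mk' (Set.range (z * ·)) ⟨0, mul_zero z⟩
    (by rintro _ _ ⟨a, rfl⟩ ⟨b, rfl⟩; exact ⟨a + b, mul_add z a b⟩)
    (by rintro _ ⟨a, rfl⟩; exact ⟨-a, mul_neg z a⟩)
    (by rintro b _ ⟨a, rfl⟩
        exact ⟨b * a, by rw [← mul_assoc, Semigroup.mem_center_iff.mp hz b, mul_assoc]⟩)
    (by rintro _ b ⟨a, rfl⟩; exact ⟨a * b, (mul_assoc z a b).symm⟩)

theorem coe_principalOfMemCenter (z : R) (hz : z ∈ Set.center R) :
    (principalOfMemCenter z hz : Set R) = Set.range (z * ·) :=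
  coe_mk' ..

variable [TopologicalSpace R] [IsTopologicalRing R]

def topologicalClosure (I : TwoSidedIdeal R) : TwoSidedIdeal R :=
  .mk' (closure (I : Set R)) (subset_closure I.zero_mem)
    (fun hx hy => map_mem_closure₂ continuous_add hx hy fun _ ha _ hb => I.add_mem ha hb)
    (fun hx => map_mem_closure continuous_neg hx fun _ ha => I.neg_mem ha)
    (fun {x _} hy =>
      map_mem_closure (continuous_const_mul x) hy fun _ ha => I.mul_mem_left _ _ ha)
    (fun {_ y} hx =>
      map_mem_closure (f := (· * y)) (continuous_mul_const y) hx fun _ ha => I.mul_mem_right _ _ ha)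

theorem coe_topologicalClosure (I : TwoSidedIdeal R) :
    (I.topologicalClosure : Set R) = closure (I : Set R) :=
  coe_mk' ..

end TwoSidedIdeal

theorem isUnit_of_mem_center_of_one_mem_closure {R : Type*} [NormedRing R]
    [HasSummableGeomSeries R] {z : R} (hz : z ∈ Set.center R)
    (h : 1 ∈ closure (Set.range (z * ·))) : IsUnit z := by
  obtain ⟨_, hunit, a, rfl⟩ := mem_closure_iff.mp h _ Units.isOpen isUnit_one
  exact ((Commute.isUnit_mul_iff (Semigroup.mem_center_iff.mp hz a).symm).mp hunit).1

theorem center_subset_range_algebraMap {A : Type*} [NormedRing A] [NormedAlgebra ℂ A]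
    [CompleteSpace A] (hsimple : ∀ I : TwoSidedIdeal A, IsClosed (I : Set A) → I = ⊥ ∨ I = ⊤) :
    Set.center A ⊆ Set.range (algebraMap ℂ A) := by
  intro z hz
  cases subsingleton_or_nontrivial A
  · exact ⟨0, Subsingleton.elim _ _⟩
  obtain ⟨c, hc⟩ := spectrum.nonempty z
  set w := algebraMap ℂ A c - z
  have hw : w ∈ Set.center A :=
    (Subalgebra.center ℂ A).sub_mem (Subalgebra.algebraMap_mem _ c) hz
  set I := (TwoSidedIdeal.principalOfMemCenter w hw).topologicalClosure
  have hI : (I : Set A) = closure (Set.range (w * ·)) := by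
    rw [TwoSidedIdeal.coe_topologicalClosure, TwoSidedIdeal.coe_principalOfMemCenter]
  rcases hsimple I (hI ▸ isClosed_closure) with hbot | htop
  · have hwI : w ∈ I := by
      rw [← SetLike.mem_coe, hI]
      exact subset_closure ⟨1, mul_one w⟩
    rw [hbot, TwoSidedIdeal.mem_bot, sub_eq_zero] at hwI
    exact ⟨c, hwI⟩
  · have h1 : (1 : A) ∈ I := htop ▸ TwoSidedIdeal.mem_top A
    rw [← SetLike.mem_coe, hI] at h1
    exact absurd (isUnit_of_mem_center_of_one_mem_closure hw h1) (spectrum.mem_iff.mp hc)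

namespace ZeroAtInftyContinuousMap

variable {X : Type*} [TopologicalSpace X]

def compLeft {β γ : Type*} [TopologicalSpace β] [Zero β] [TopologicalSpace γ] [Zero γ]
    (g : β → γ) (hg : Continuous g) (hg0 : g 0 = 0) (f : C₀(X, β)) : C₀(X, γ) where
  toFun := g ∘ f
  continuous_toFun := hg.comp f.continuous
  zero_at_infty' := hg0 ▸ (hg.tendsto 0).comp (zero_at_infty f)

@[simp]
theorem compLeft_apply {β γ : Type*} [TopologicalSpace β] [Zero β] [TopologicalSpace γ] [Zero γ]
    (g : β → γ) (hg : Continuous g) (hg0 : g 0 = 0) (f : C₀(X, β)) (x : X) :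
    compLeft g hg hg0 f x = g (f x) :=
  rfl

theorem exists_apply_eq [RegularSpace X] [LocallyCompactSpace X] {E : Type*}
    [TopologicalSpace E] [AddCommMonoid E] [Module ℝ E] [ContinuousSMul ℝ E] (x : X) (a : E) :
    ∃ g : C₀(X, E), g x = a := by
  obtain ⟨χ, hχx, -, hχ, -⟩ :=
    exists_continuous_one_zero_of_isCompact isCompact_singleton isClosed_empty
      (Set.disjoint_empty {x})
  refine ⟨⟨⟨fun y => χ y • a, by fun_prop⟩, ?_⟩, ?_⟩
  · simpa using hχ.is_zero_at_infty.smul_const a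
  · simp [hχx (Set.mem_singleton x)]

variable {A : Type*} [NormedRing A] [NormedAlgebra ℂ A] {F : Set X} {f : C₀(X, A)}

theorem apply_mem_center_of_forall_commutator_eq_zero [RegularSpace X] [LocallyCompactSpace X]
    (hf : ∀ g : C₀(X, A), ∀ x ∈ F, f x * g x - g x * f x = 0) {x : X} (hx : x ∈ F) :
    f x ∈ Set.center A :=
  Semigroup.mem_center_iff.mpr fun a => by
    obtain ⟨g, rfl⟩ := exists_apply_eq x a
    exact (sub_eq_zero.mp (hf g x hx)).symm

theorem exists_eq_add_smul_one_of_mem_range_algebraMap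
    (hf : ∀ x ∈ F, f x ∈ Set.range (algebraMap ℂ A)) :
    ∃ (j : C₀(X, A)) (h : C₀(X, ℂ)), (∀ x ∈ F, j x = 0) ∧ ∀ x : X, f x = j x + h x • (1 : A) := by
  cases subsingleton_or_nontrivial A
  · exact ⟨f, 0, fun _ _ => Subsingleton.elim _ _, fun _ => Subsingleton.elim _ _⟩
  obtain ⟨φ, hφ⟩ := SeparatingDual.exists_eq_one (R := ℂ) (one_ne_zero (α := A))
  set h := compLeft φ φ.continuous φ.map_zero f
  set s := compLeft (· • (1 : A)) (by fun_prop) (zero_smul ℂ 1) h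
  refine ⟨f - s, h, fun x hx => ?_, fun x => by simp [s]⟩
  obtain ⟨c, hc⟩ := hf x hx
  simp [s, h, ← hc, Algebra.algebraMap_eq_smul_one, hφ]

end ZeroAtInftyContinuousMap

theorem lieNormalizer_vanishing_ideal_of_simple_unital_general
    (A : Type*) [NormedRing A] [NormedAlgebra ℂ A]
    [CompleteSpace A]
    (hsimple : ∀ I : TwoSidedIdeal A, IsClosed (I : Set A) → I = ⊥ ∨ I = ⊤)
    (X : Type*) [TopologicalSpace X] [T2Space X] [LocallyCompactSpace X]
    (F : Set X) :
    {f : C₀(X, A) | ∀ g : C₀(X, A), ∀ x ∈ F, f x * g x - g x * f x = 0} =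
      {f : C₀(X, A) | ∃ (j : C₀(X, A)) (h : C₀(X, ℂ)),
        (∀ x ∈ F, j x = 0) ∧ ∀ x : X, f x = j x + h x • (1 : A)} := by
  ext f
  refine ⟨fun hf => ?_, ?_⟩
  · exact ZeroAtInftyContinuousMap.exists_eq_add_smul_one_of_mem_range_algebraMap fun x hx =>
      center_subset_range_algebraMap hsimple
        (ZeroAtInftyContinuousMap.apply_mem_center_of_forall_commutator_eq_zero hf hx)
  · rintro ⟨j, h, hj, hf⟩ g x hx
    rw [hf x, hj x hx, zero_add, smul_one_mul, mul_smul_one, sub_self]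

/-- Let `A` be a simple unital C*-algebra, `X` a locally compact Hausdorff
space, and `I = J̃(F) = {f ∈ C₀(X,A) | f ≡ 0 on F}` (`F ⊆ X` closed) a closed ideal of
`C₀(X, A)`.  Then the Lie normalizer `N(I) = {f | [f, g] ∈ I for all g}` equals
`I + {x ↦ h(x)·1 | h ∈ C₀(X)}`. -/
theorem lieNormalizer_vanishing_ideal_of_simple_unital
    (A : Type*) [NormedRing A] [StarRing A] [CStarRing A] [NormedAlgebra ℂ A]
    [StarModule ℂ A] [CompleteSpace A]
    (hsimple : ∀ I : TwoSidedIdeal A, IsClosed (I : Set A) → I = ⊥ ∨ I = ⊤)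
    (X : Type*) [TopologicalSpace X] [T2Space X] [LocallyCompactSpace X]
    (F : Set X) (hF : IsClosed F) :
    {f : C₀(X, A) | ∀ g : C₀(X, A), ∀ x ∈ F, f x * g x - g x * f x = 0} =
      {f : C₀(X, A) | ∃ (j : C₀(X, A)) (h : C₀(X, ℂ)),
        (∀ x ∈ F, j x = 0) ∧ ∀ x : X, f x = j x + h x • (1 : A)} :=
  lieNormalizer_vanishing_ideal_of_simple_unital_general A hsimple X F
end
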